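/- Let k ≥ 1, α ∈ (0,1), θ ∈ Δ([k]). Let ψ ∈ ℂ^{𝒳₁×…×𝒳ₖ} and φ ∈ ℂ^{𝒴₁×…×𝒴ₖ} be nonzero, and let ψ ⊕ φ ∈ ℂ^{(𝒳₁⊔𝒴₁)×…×(𝒳ₖ⊔𝒴ₖ)} be the vector that agrees with ψ on the embedded set 𝒳₁ × … × 𝒳ₖ, agrees with φ on the embedded set 𝒴₁ × … × 𝒴ₖ, and is zero on all mixed tuples. Then 2^{(1−α)·ρ^{α,θ}(ψ⊕φ)} ≤ 2^{(1−α)·ρ^{α,θ}(ψ)} + 2^{(1−α)·ρ^{α,θ}(φ)}. -/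

import Mathlib

open Finset

noncomputable section

/-- A probability distribution on a finite set. -/
def probVec {X : Type*} [Fintype X] (Q : X → ℝ) : Prop :=
  (∀ x, 0 ≤ Q x) ∧ ∑ x, Q x = 1

/-- Shannon entropy (base 2) of a measure on a finite set; `0 · log 0 = 0`. -/
def shEnt {X : Type*} [Fintype X] (Q : X → ℝ) : ℝ :=
  -∑ x, Q x * Real.logb 2 (Q x)

/-- Kullback–Leibler divergence (base 2); terms with `Q x = 0` vanish. -/
def klD {X : Type*} [Fintype X] (Q P : X → ℝ) : ℝ :=
  ∑ x, Q x * Real.logb 2 (Q x / P x)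

/-- `j`-th marginal of a measure on a finite product. -/
def marg {k : ℕ} {𝒳 : Fin k → Type*} [∀ j, Fintype (𝒳 j)] [∀ j, DecidableEq (𝒳 j)]
    (P : (∀ j, 𝒳 j) → ℝ) (j : Fin k) : 𝒳 j → ℝ :=
  fun a => ∑ x : ∀ i, 𝒳 i, if x j = a then P x else 0

/-- The functional `H_{α,θ}(P)`. -/
def Hat {k : ℕ} {𝒳 : Fin k → Type*} [∀ j, Fintype (𝒳 j)] [∀ j, DecidableEq (𝒳 j)]
    (α : ℝ) (θ : Fin k → ℝ) (P : (∀ j, 𝒳 j) → ℝ) : ℝ :=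
  sSup { v : ℝ | ∃ Q : (∀ j, 𝒳 j) → ℝ, probVec Q ∧ (∀ x, P x = 0 → Q x = 0) ∧
    v = (∑ j, θ j * shEnt (marg Q j)) - α / (1 - α) * klD Q P }

/-- Rényi entropy of order `α` of a measure on a finite set. -/
def renyiEnt {X : Type*} [Fintype X] (α : ℝ) (μ : X → ℝ) : ℝ :=
  (1 / (1 - α)) * Real.logb 2 (∑ x, μ x ^ α)

/-- The vector obtained by applying the local unitaries `U j` to `ψ`. -/
def applyU {k : ℕ} {𝒳 : Fin k → Type*} [∀ j, Fintype (𝒳 j)]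
    (U : ∀ j, Matrix (𝒳 j) (𝒳 j) ℂ) (ψ : (∀ j, 𝒳 j) → ℂ) : (∀ j, 𝒳 j) → ℂ :=
  fun x => ∑ y : ∀ i, 𝒳 i, (∏ j, U j (x j) (y j)) * ψ y

/-- The measured distribution of `ψ` in the product basis determined by `U`. -/
def measd {k : ℕ} {𝒳 : Fin k → Type*} [∀ j, Fintype (𝒳 j)]
    (U : ∀ j, Matrix (𝒳 j) (𝒳 j) ℂ) (ψ : (∀ j, 𝒳 j) → ℂ) : (∀ j, 𝒳 j) → ℝ :=
  fun x => ‖applyU U ψ x‖ ^ 2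

/-- The functional `ρ^{α,θ}(ψ)`: the infimum of `H_{α,θ}` of the measured
distribution over all choices of local orthonormal bases. -/
def rhoAT {k : ℕ} {𝒳 : Fin k → Type*} [∀ j, Fintype (𝒳 j)] [∀ j, DecidableEq (𝒳 j)]
    (α : ℝ) (θ : Fin k → ℝ) (ψ : (∀ j, 𝒳 j) → ℂ) : ℝ :=
  sInf { v : ℝ | ∃ U : ∀ j, Matrix (𝒳 j) (𝒳 j) ℂ,
    (∀ j, U j ∈ Matrix.unitaryGroup (𝒳 j) ℂ) ∧ v = Hat α θ (measd U ψ) }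

section PartA

/-! ### Basic analytic lemmas -/

/-- Jensen's inequality for `logb 2`. -/
lemma sum_logb_le {ι : Type*} (t : Finset ι) (w p : ι → ℝ) (hw : ∀ i ∈ t, 0 ≤ w i)
    (hw1 : ∑ i ∈ t, w i = 1) (hp : ∀ i ∈ t, 0 < p i) :
    ∑ i ∈ t, w i * Real.logb 2 (p i) ≤ Real.logb 2 (∑ i ∈ t, w i * p i) := by
  have hcc : ConcaveOn ℝ (Set.Ioi 0) Real.log := strictConcaveOn_log_Ioi.concaveOn
  have h := hcc.le_map_sum hw hw1 (fun i hi => hp i hi)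
  simp only [smul_eq_mul] at h
  have hl2 : (0:ℝ) < Real.log 2 := Real.log_pos one_lt_two
  unfold Real.logb
  calc ∑ i ∈ t, w i * (Real.log (p i) / Real.log 2)
      = (∑ i ∈ t, w i * Real.log (p i)) / Real.log 2 := by
        rw [Finset.sum_div]; exact Finset.sum_congr rfl fun i _ => (mul_div_assoc _ _ _).symm
    _ ≤ Real.log (∑ i ∈ t, w i * p i) / Real.log 2 := by gcongr

/-- Restriction of sums to the support. -/
lemma sum_support_eq {X : Type*} [Fintype X] (Q : X → ℝ) (f : X → ℝ)
    (hf : ∀ x, Q x = 0 → Q x * f x = 0) :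
    ∑ x ∈ Finset.univ.filter (fun x => Q x ≠ 0), Q x * f x = ∑ x, Q x * f x := by
  classical
  refine Finset.sum_subset (Finset.subset_univ _) ?_
  intro x _ hx
  simp only [Finset.mem_filter, Finset.mem_univ, true_and, not_not] at hx
  exact hf x hx

/-- Entropy of a probability vector is at most `logb 2 card`. -/
lemma shEnt_le_card {X : Type*} [Fintype X] (Q : X → ℝ) (hQ : probVec Q) :
    shEnt Q ≤ Real.logb 2 (Fintype.card X) := by
  classical
  set t := Finset.univ.filter (fun x => Q x ≠ 0) with ht
  have hmem : ∀ x ∈ t, 0 < Q x := by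
    intro x hx
    rw [ht, Finset.mem_filter] at hx
    exact lt_of_le_of_ne (hQ.1 x) (Ne.symm hx.2)
  have hsum : ∑ x ∈ t, Q x = 1 := by
    rw [ht, Finset.sum_filter_ne_zero, hQ.2]
  have htn : t.Nonempty := Finset.nonempty_of_sum_ne_zero (by rw [hsum]; norm_num)
  have h1 : shEnt Q = ∑ x ∈ t, Q x * Real.logb 2 (1 / Q x) := by
    unfold shEnt
    rw [← sum_support_eq Q (fun x => Real.logb 2 (Q x)) (by intro x h; rw [h, zero_mul]), ← ht,
      ← Finset.sum_neg_distrib]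
    refine Finset.sum_congr rfl fun x hx => ?_
    rw [one_div, Real.logb_inv]
    ring
  have h2 : ∑ x ∈ t, Q x * (1 / Q x) = (t.card : ℝ) := by
    have hc : ∀ x ∈ t, Q x * (1 / Q x) = 1 := fun x hx => by
      rw [mul_one_div, div_self (hmem x hx).ne']
    rw [Finset.sum_congr rfl hc, Finset.sum_const, nsmul_eq_mul, mul_one]
  have h3 : ∑ x ∈ t, Q x * Real.logb 2 (1 / Q x) ≤
      Real.logb 2 (∑ x ∈ t, Q x * (1 / Q x)) :=
    sum_logb_le t Q _ (fun x hx => (hmem x hx).le) hsum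
      (fun x hx => one_div_pos.mpr (hmem x hx))
  rw [h1]
  refine h3.trans ?_
  rw [h2]
  have hcard : (t.card : ℝ) ≤ (Fintype.card X : ℝ) := by
    exact_mod_cast Finset.card_le_card (Finset.subset_univ t)
  have htpos : (0:ℝ) < t.card := by exact_mod_cast Finset.card_pos.mpr htn
  exact (Real.logb_le_logb one_lt_two htpos (htpos.trans_le hcard)).mpr hcard

/-- Lower bound on KL divergence against a measure of total mass `s`. -/
lemma klD_ge {X : Type*} [Fintype X] (Q P : X → ℝ) (hQ : probVec Q) (hP : ∀ x, 0 ≤ P x)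
    (hsupp : ∀ x, P x = 0 → Q x = 0) :
    - Real.logb 2 (∑ x, P x) ≤ klD Q P := by
  classical
  set t := Finset.univ.filter (fun x => Q x ≠ 0) with ht
  have hmem : ∀ x ∈ t, 0 < Q x := by
    intro x hx
    rw [ht, Finset.mem_filter] at hx
    exact lt_of_le_of_ne (hQ.1 x) (Ne.symm hx.2)
  have hPmem : ∀ x ∈ t, 0 < P x := by
    intro x hx
    rcases (hP x).lt_or_eq with h | h
    · exact h
    · exact absurd (hsupp x h.symm) (by exact (Finset.mem_filter.mp hx).2)
  have hsum : ∑ x ∈ t, Q x = 1 := by rw [ht, Finset.sum_filter_ne_zero, hQ.2]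
  have h1 : klD Q P = ∑ x ∈ t, Q x * Real.logb 2 (Q x / P x) := by
    unfold klD
    rw [← sum_support_eq Q _ (by intro x h; rw [h, zero_mul]), ← ht]
  have h2 : -klD Q P = ∑ x ∈ t, Q x * Real.logb 2 (P x / Q x) := by
    rw [h1, ← Finset.sum_neg_distrib]
    refine Finset.sum_congr rfl fun x hx => ?_
    rw [Real.logb_div (hPmem x hx).ne' (hmem x hx).ne',
      Real.logb_div (hmem x hx).ne' (hPmem x hx).ne']
    ring
  have h3 : ∑ x ∈ t, Q x * Real.logb 2 (P x / Q x) ≤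
      Real.logb 2 (∑ x ∈ t, Q x * (P x / Q x)) :=
    sum_logb_le t Q _ (fun x hx => (hmem x hx).le) hsum
      (fun x hx => div_pos (hPmem x hx) (hmem x hx))
  have h4 : ∑ x ∈ t, Q x * (P x / Q x) = ∑ x ∈ t, P x := by
    refine Finset.sum_congr rfl fun x hx => ?_
    rw [mul_comm, div_mul_cancel₀ _ (hmem x hx).ne']
  have h5 : ∑ x ∈ t, P x ≤ ∑ x, P x :=
    Finset.sum_le_sum_of_subset_of_nonneg (Finset.subset_univ _) (fun x _ _ => hP x)
  have htn : t.Nonempty := Finset.nonempty_of_sum_ne_zero (by rw [hsum]; norm_num)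
  have hpos : 0 < ∑ x ∈ t, P x := Finset.sum_pos hPmem htn
  have h6 : Real.logb 2 (∑ x ∈ t, P x) ≤ Real.logb 2 (∑ x, P x) :=
    (Real.logb_le_logb one_lt_two hpos (hpos.trans_le h5)).mpr h5
  have h7 : -klD Q P ≤ Real.logb 2 (∑ x, P x) := by
    rw [h2]; refine h3.trans ?_; rw [h4]; exact h6
  linarith

end PartA

section PartB

variable {k : ℕ} {𝒳 : Fin k → Type*} [∀ j, Fintype (𝒳 j)] [∀ j, DecidableEq (𝒳 j)]

lemma marg_nonneg (Q : (∀ j, 𝒳 j) → ℝ) (hQ : ∀ x, 0 ≤ Q x) (j : Fin k) (a : 𝒳 j) :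
    0 ≤ marg Q j a :=
  Finset.sum_nonneg fun x _ => by split_ifs; exacts [hQ x, le_rfl]

lemma sum_marg (Q : (∀ j, 𝒳 j) → ℝ) (j : Fin k) : ∑ a, marg Q j a = ∑ x, Q x := by
  unfold marg
  rw [Finset.sum_comm]
  refine Finset.sum_congr rfl fun x _ => ?_
  rw [Finset.sum_ite_eq Finset.univ (x j) (fun _ => Q x)]
  simp

lemma marg_probVec (Q : (∀ j, 𝒳 j) → ℝ) (hQ : probVec Q) (j : Fin k) :
    probVec (marg Q j) :=
  ⟨marg_nonneg Q hQ.1 j, by rw [sum_marg, hQ.2]⟩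

/-- The defining set of `Hat`. -/
def hatSet (α : ℝ) (θ : Fin k → ℝ) (P : (∀ j, 𝒳 j) → ℝ) : Set ℝ :=
  { v : ℝ | ∃ Q : (∀ j, 𝒳 j) → ℝ, probVec Q ∧ (∀ x, P x = 0 → Q x = 0) ∧
    v = (∑ j, θ j * shEnt (marg Q j)) - α / (1 - α) * klD Q P }

lemma Hat_eq_sSup (α : ℝ) (θ : Fin k → ℝ) (P : (∀ j, 𝒳 j) → ℝ) :
    Hat α θ P = sSup (hatSet α θ P) := rfl

lemma hatSet_bddAbove (α : ℝ) (hα : α ∈ Set.Ioo (0:ℝ) 1) (θ : Fin k → ℝ) (hθ : probVec θ)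
    (P : (∀ j, 𝒳 j) → ℝ) (hP : ∀ x, 0 ≤ P x) (hPs : 0 < ∑ x, P x) :
    BddAbove (hatSet α θ P) := by
  refine ⟨(∑ j, θ j * Real.logb 2 (Fintype.card (𝒳 j))) +
    α / (1 - α) * Real.logb 2 (∑ x, P x), ?_⟩
  rintro v ⟨Q, hQ, hsupp, rfl⟩
  have hc : 0 ≤ α / (1 - α) := by
    have h1 := hα.1; have h2 := hα.2
    have h3 : 0 < 1 - α := by linarith
    positivity
  have h1 : ∑ j, θ j * shEnt (marg Q j) ≤ ∑ j, θ j * Real.logb 2 (Fintype.card (𝒳 j)) :=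
    Finset.sum_le_sum fun j _ =>
      mul_le_mul_of_nonneg_left (shEnt_le_card _ (marg_probVec Q hQ j)) (hθ.1 j)
  have h2 := klD_ge Q P hQ hP hsupp
  have h3 : -(α / (1 - α) * klD Q P) ≤ α / (1 - α) * Real.logb 2 (∑ x, P x) := by
    rw [← mul_neg]
    exact mul_le_mul_of_nonneg_left (by linarith) hc
  linarith

lemma dirac_mem (α : ℝ) (θ : Fin k → ℝ) (P : (∀ j, 𝒳 j) → ℝ)
    (x0 : ∀ j, 𝒳 j) (hx0 : 0 < P x0) :
    (α / (1 - α) * Real.logb 2 (P x0)) ∈ hatSet α θ P := by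
  classical
  refine ⟨fun x => if x = x0 then 1 else 0, ⟨fun x => by dsimp only; split_ifs <;> norm_num, ?_⟩,
    ?_, ?_⟩
  · rw [Finset.sum_ite_eq' Finset.univ x0 (fun _ => (1:ℝ))]; simp
  · intro x hx
    dsimp only; split_ifs with h
    · subst h; exact absurd hx hx0.ne'
    · rfl
  · have hmarg : ∀ (j : Fin k) (a : 𝒳 j),
        marg (fun x => if x = x0 then (1:ℝ) else 0) j a = if x0 j = a then 1 else 0 := by
      intro j a
      unfold marg
      rw [show (∑ x : ∀ i, 𝒳 i, if x j = a then (if x = x0 then (1:ℝ) else 0) else 0)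
          = ∑ x : ∀ i, 𝒳 i, if x = x0 then (if x j = a then (1:ℝ) else 0) else 0 from
        Finset.sum_congr rfl fun x _ => by
          by_cases h1 : x = x0 <;> by_cases h2 : x j = a <;> simp [h1, h2] <;> simp_all,
        Finset.sum_ite_eq' Finset.univ x0 (fun x => if x j = a then (1:ℝ) else 0)]
      simp
    have hent : ∀ j : Fin k, shEnt (marg (fun x => if x = x0 then (1:ℝ) else 0) j) = 0 := by
      intro j
      unfold shEnt
      rw [Finset.sum_congr rfl (fun a _ => show
        marg (fun x => if x = x0 then (1:ℝ) else 0) j a *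
          Real.logb 2 (marg (fun x => if x = x0 then (1:ℝ) else 0) j a) = 0 from by
        rw [hmarg j a]
        split_ifs <;> simp)]
      simp
    have hkl : klD (fun x => if x = x0 then (1:ℝ) else 0) P = - Real.logb 2 (P x0) := by
      unfold klD
      rw [Finset.sum_congr rfl (fun x _ => show
          (if x = x0 then (1:ℝ) else 0) * Real.logb 2 ((if x = x0 then (1:ℝ) else 0) / P x)
          = (if x = x0 then Real.logb 2 (1 / P x0) else 0) from by
        split_ifs with h
        · subst h; rw [one_mul]
        · rw [zero_mul]),
        Finset.sum_ite_eq' Finset.univ x0 (fun _ => Real.logb 2 (1 / P x0))]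
      simp [one_div, Real.logb_inv]
    rw [hkl]
    rw [Finset.sum_congr rfl (fun j _ => by rw [hent j])]
    simp

lemma hatSet_nonempty (α : ℝ) (θ : Fin k → ℝ) (P : (∀ j, 𝒳 j) → ℝ)
    (hP : ∀ x, 0 ≤ P x) (hPs : 0 < ∑ x, P x) : (hatSet α θ P).Nonempty := by
  have : ∃ x0, 0 < P x0 := by
    by_contra h
    push_neg at h
    have : ∀ x, P x = 0 := fun x => le_antisymm (h x) (hP x)
    simp [this] at hPs
  obtain ⟨x0, hx0⟩ := this
  exact ⟨_, dirac_mem α θ P x0 hx0⟩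

lemma hat_lb (α : ℝ) (hα : α ∈ Set.Ioo (0:ℝ) 1) (θ : Fin k → ℝ) (hθ : probVec θ)
    (P : (∀ j, 𝒳 j) → ℝ) (hP : ∀ x, 0 ≤ P x) (hPs : 0 < ∑ x, P x) :
    α / (1 - α) * Real.logb 2 ((∑ x, P x) / (Fintype.card (∀ j, 𝒳 j) : ℝ)) ≤ Hat α θ P := by
  classical
  have hne : (Finset.univ : Finset (∀ j, 𝒳 j)).Nonempty :=
    Finset.nonempty_of_sum_ne_zero hPs.ne'
  have hNpos : (0:ℝ) < (Fintype.card (∀ j, 𝒳 j) : ℝ) := by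
    have := Fintype.card_pos_iff.mpr ⟨hne.choose⟩
    exact_mod_cast this
  have hx : ∃ x0 ∈ Finset.univ, (∑ x, P x) / (Fintype.card (∀ j, 𝒳 j) : ℝ) ≤ P x0 := by
    apply Finset.exists_le_of_sum_le hne
    rw [Finset.sum_const, Finset.card_univ, nsmul_eq_mul]
    rw [mul_div_cancel₀ _ hNpos.ne']
  obtain ⟨x0, _, hx0⟩ := hx
  have hqpos : 0 < (∑ x, P x) / (Fintype.card (∀ j, 𝒳 j) : ℝ) := by positivity
  have hPx0 : 0 < P x0 := lt_of_lt_of_le hqpos hx0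
  have hc : 0 ≤ α / (1 - α) := by
    have h1 := hα.1; have h2 := hα.2
    have : 0 < 1 - α := by linarith
    positivity
  have hmem := dirac_mem α θ P x0 hPx0
  have hle := le_csSup (hatSet_bddAbove α hα θ hθ P hP hPs) hmem
  rw [Hat_eq_sSup]
  refine le_trans ?_ hle
  exact mul_le_mul_of_nonneg_left
    ((Real.logb_le_logb one_lt_two hqpos hPx0).mpr hx0) hc

end PartB

section PartC

variable {k : ℕ} {𝒳 : Fin k → Type*} [∀ j, Fintype (𝒳 j)] [∀ j, DecidableEq (𝒳 j)]

lemma key_unitary (U : ∀ j, Matrix (𝒳 j) (𝒳 j) ℂ)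
    (hU : ∀ j, U j ∈ Matrix.unitaryGroup (𝒳 j) ℂ) (y z : ∀ j, 𝒳 j) :
    ∑ x : ∀ j, 𝒳 j, (∏ j, U j (x j) (y j)) * (starRingEnd ℂ) (∏ j, U j (x j) (z j))
      = if y = z then 1 else 0 := by
  classical
  have h1 : ∀ x : ∀ j, 𝒳 j, (∏ j, U j (x j) (y j)) * (starRingEnd ℂ) (∏ j, U j (x j) (z j))
      = ∏ j, (U j (x j) (y j) * (starRingEnd ℂ) (U j (x j) (z j))) := by
    intro x
    rw [map_prod, ← Finset.prod_mul_distrib]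
  have e1 : (∑ x : ∀ j, 𝒳 j, ∏ j, (U j (x j) (y j) * (starRingEnd ℂ) (U j (x j) (z j))))
      = ∏ j, ∑ a, (U j a (y j) * (starRingEnd ℂ) (U j a (z j))) := by
    rw [← Fintype.piFinset_univ]
    exact (Finset.prod_univ_sum (fun _ => Finset.univ)
      (fun j a => U j a (y j) * (starRingEnd ℂ) (U j a (z j)))).symm
  rw [Finset.sum_congr rfl (fun x _ => h1 x), e1]
  have h2 : ∀ j, (∑ a, U j a (y j) * (starRingEnd ℂ) (U j a (z j)))
      = if y j = z j then 1 else 0 := by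
    intro j
    have hu := Matrix.mem_unitaryGroup_iff'.mp (hU j)
    have h4 : (star (U j) * U j) (z j) (y j) = (1 : Matrix (𝒳 j) (𝒳 j) ℂ) (z j) (y j) := by
      rw [hu]
    rw [Matrix.mul_apply, Matrix.one_apply] at h4
    have h5 : ∑ a, U j a (y j) * (starRingEnd ℂ) (U j a (z j))
        = ∑ a, (star (U j)) (z j) a * (U j) a (y j) := by
      refine Finset.sum_congr rfl fun a _ => ?_
      rw [Matrix.star_apply]
      ring_nf
      rfl
    rw [h5, h4]
    by_cases h : y j = z j <;> simp [h, eq_comm]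
  rw [Finset.prod_congr rfl (fun j _ => h2 j)]
  by_cases h : y = z
  · subst h; simp
  · obtain ⟨j, hj⟩ : ∃ j, y j ≠ z j := by
      by_contra h'; push_neg at h'; exact h (funext h')
    rw [if_neg h]
    exact Finset.prod_eq_zero (Finset.mem_univ j) (if_neg hj)

lemma sum_sq_abs_eq {Y : Type*} [Fintype Y] (f : Y → ℂ) :
    ∑ x : Y, ‖f x‖ ^ 2 = (∑ x : Y, f x * (starRingEnd ℂ) (f x)).re := by
  rw [Complex.re_sum]
  refine Finset.sum_congr rfl fun x _ => ?_
  rw [Complex.sq_norm, Complex.mul_conj]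
  simp

lemma sum_measd (U : ∀ j, Matrix (𝒳 j) (𝒳 j) ℂ)
    (hU : ∀ j, U j ∈ Matrix.unitaryGroup (𝒳 j) ℂ) (ψ : (∀ j, 𝒳 j) → ℂ) :
    ∑ x, measd U ψ x = ∑ y, ‖ψ y‖ ^ 2 := by
  classical
  have expand : ∀ x, applyU U ψ x * (starRingEnd ℂ) (applyU U ψ x)
      = ∑ y : ∀ j, 𝒳 j, ∑ z : ∀ j, 𝒳 j,
        ((∏ j, U j (x j) (y j)) * (starRingEnd ℂ) (∏ j, U j (x j) (z j)))
          * (ψ y * (starRingEnd ℂ) (ψ z)) := by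
    intro x
    unfold applyU
    rw [map_sum, Finset.sum_mul_sum]
    refine Finset.sum_congr rfl fun y _ => Finset.sum_congr rfl fun z _ => ?_
    rw [map_mul]; ring
  have main : ∑ x, applyU U ψ x * (starRingEnd ℂ) (applyU U ψ x)
      = ∑ y, ψ y * (starRingEnd ℂ) (ψ y) := by
    rw [Finset.sum_congr rfl (fun x _ => expand x), Finset.sum_comm]
    rw [Finset.sum_congr rfl (fun y (_ : y ∈ Finset.univ) => Finset.sum_comm (γ := ∀ j, 𝒳 j))]
    refine Finset.sum_congr rfl fun y _ => ?_
    have inner : ∀ z, (∑ x : ∀ j, 𝒳 j,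
        ((∏ j, U j (x j) (y j)) * (starRingEnd ℂ) (∏ j, U j (x j) (z j)))
          * (ψ y * (starRingEnd ℂ) (ψ z)))
        = (if y = z then 1 else 0) * (ψ y * (starRingEnd ℂ) (ψ z)) := by
      intro z
      rw [← Finset.sum_mul, key_unitary U hU y z]
    rw [Finset.sum_congr rfl (fun z _ => inner z)]
    rw [Finset.sum_congr rfl (fun z (_ : z ∈ Finset.univ) => (ite_mul _ _ _ _))]
    simp only [one_mul, zero_mul]
    rw [Finset.sum_ite_eq Finset.univ y (fun z => ψ y * (starRingEnd ℂ) (ψ z))]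
    simp
  show ∑ x, ‖applyU U ψ x‖ ^ 2 = _
  rw [sum_sq_abs_eq (applyU U ψ), sum_sq_abs_eq ψ, main]

end PartC

section PartD

lemma not_pure_inl_exists {k : ℕ} {𝒳 𝒴 : Fin k → Type*} (x : ∀ i, 𝒳 i ⊕ 𝒴 i)
    (h : ¬ ∃ a : ∀ i, 𝒳 i, ∀ i, x i = Sum.inl (a i)) : ∃ i c, x i = Sum.inr c := by
  by_contra h'
  push_neg at h'
  have : ∀ i, ∃ c, x i = Sum.inl c := by
    intro i
    cases hx : x i with
    | inl c => exact ⟨c, rfl⟩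
    | inr c => exact absurd hx (h' i c)
  choose a ha using this
  exact h ⟨a, ha⟩

lemma not_pure_inr_exists {k : ℕ} {𝒳 𝒴 : Fin k → Type*} (x : ∀ i, 𝒳 i ⊕ 𝒴 i)
    (h : ¬ ∃ b : ∀ i, 𝒴 i, ∀ i, x i = Sum.inr (b i)) : ∃ i c, x i = Sum.inl c := by
  by_contra h'
  push_neg at h'
  have : ∀ i, ∃ c, x i = Sum.inr c := by
    intro i
    cases hx : x i with
    | inl c => exact absurd hx (h' i c)
    | inr c => exact ⟨c, rfl⟩
  choose b hb using this
  exact h ⟨b, hb⟩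

variable {k : ℕ} {𝒳 𝒴 : Fin k → Type*} [∀ j, Fintype (𝒳 j)] [∀ j, DecidableEq (𝒳 j)]
  [∀ j, Fintype (𝒴 j)] [∀ j, DecidableEq (𝒴 j)]

/-- Decomposition of a sum over tuples in a product of sum types, when the summand
vanishes on mixed tuples. -/
lemma sum_pi_sum {M : Type*} [AddCommMonoid M] (hk : 1 ≤ k)
    (g : (∀ i, 𝒳 i ⊕ 𝒴 i) → M)
    (hg : ∀ x, (¬ ∃ a : ∀ i, 𝒳 i, ∀ i, x i = Sum.inl (a i)) →
      (¬ ∃ b : ∀ i, 𝒴 i, ∀ i, x i = Sum.inr (b i)) → g x = 0) :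
    ∑ x, g x = (∑ a : ∀ i, 𝒳 i, g (fun i => Sum.inl (a i)))
      + ∑ b : ∀ i, 𝒴 i, g (fun i => Sum.inr (b i)) := by
  classical
  set eL : (∀ i, 𝒳 i) → (∀ i, 𝒳 i ⊕ 𝒴 i) := fun a i => Sum.inl (a i) with heL
  set eR : (∀ i, 𝒴 i) → (∀ i, 𝒳 i ⊕ 𝒴 i) := fun b i => Sum.inr (b i) with heR
  have hinjL : ∀ a ∈ Finset.univ, ∀ a' ∈ Finset.univ, eL a = eL a' → a = a' := by
    intro a _ a' _ h
    funext i
    exact Sum.inl.inj (congrFun h i)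
  have hinjR : ∀ b ∈ Finset.univ, ∀ b' ∈ Finset.univ, eR b = eR b' → b = b' := by
    intro b _ b' _ h
    funext i
    exact Sum.inr.inj (congrFun h i)
  have h1 : ∑ a : ∀ i, 𝒳 i, g (eL a) = ∑ x ∈ Finset.univ.image eL, g x :=
    (Finset.sum_image hinjL).symm
  have h2 : ∑ b : ∀ i, 𝒴 i, g (eR b) = ∑ x ∈ Finset.univ.image eR, g x :=
    (Finset.sum_image hinjR).symm
  have hdisj : Disjoint (Finset.univ.image eL) (Finset.univ.image eR) := by
    rw [Finset.disjoint_left]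
    rintro x hx1 hx2
    obtain ⟨a, _, rfl⟩ := Finset.mem_image.mp hx1
    obtain ⟨b, _, hb⟩ := Finset.mem_image.mp hx2
    have := congrFun hb ⟨0, hk⟩
    simp [heL, heR] at this
  show _ = (∑ a : ∀ i, 𝒳 i, g (eL a)) + ∑ b : ∀ i, 𝒴 i, g (eR b)
  rw [h1, h2, ← Finset.sum_union hdisj]
  refine (Finset.sum_subset (Finset.subset_univ _) ?_).symm
  intro x _ hx
  rw [Finset.mem_union] at hx
  push_neg at hx
  refine hg x ?_ ?_
  · rintro ⟨a, ha⟩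
    exact hx.1 (Finset.mem_image.mpr ⟨a, Finset.mem_univ a, by funext i; exact (ha i).symm⟩)
  · rintro ⟨b, hb⟩
    exact hx.2 (Finset.mem_image.mpr ⟨b, Finset.mem_univ b, by funext i; exact (hb i).symm⟩)

/-- A block-diagonal matrix built from unitaries is unitary. -/
lemma fromBlocks_mem_unitary {X Y : Type*} [Fintype X] [DecidableEq X] [Fintype Y]
    [DecidableEq Y] (A : Matrix X X ℂ) (B : Matrix Y Y ℂ)
    (hA : A ∈ Matrix.unitaryGroup X ℂ) (hB : B ∈ Matrix.unitaryGroup Y ℂ) :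
    Matrix.fromBlocks A 0 0 B ∈ Matrix.unitaryGroup (X ⊕ Y) ℂ := by
  rw [Matrix.mem_unitaryGroup_iff]
  rw [Matrix.star_eq_conjTranspose, Matrix.fromBlocks_conjTranspose,
    Matrix.conjTranspose_zero, Matrix.fromBlocks_multiply]
  have hA1 : A * star A = 1 := Matrix.mem_unitaryGroup_iff.mp hA
  have hB1 : B * star B = 1 := Matrix.mem_unitaryGroup_iff.mp hB
  rw [Matrix.star_eq_conjTranspose] at hA1 hB1
  simp [hA1, hB1, Matrix.fromBlocks_one]

variable (hk : 1 ≤ k) (U : ∀ j, Matrix (𝒳 j) (𝒳 j) ℂ) (V : ∀ j, Matrix (𝒴 j) (𝒴 j) ℂ)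
  (ψ : (∀ i, 𝒳 i) → ℂ) (φ : (∀ i, 𝒴 i) → ℂ) (χ : (∀ i, 𝒳 i ⊕ 𝒴 i) → ℂ)
  (hχ1 : ∀ a : ∀ i, 𝒳 i, χ (fun i => Sum.inl (a i)) = ψ a)
  (hχ2 : ∀ b : ∀ i, 𝒴 i, χ (fun i => Sum.inr (b i)) = φ b)
  (hχ0 : ∀ x : ∀ i, 𝒳 i ⊕ 𝒴 i,
      (¬ ∃ a : ∀ i, 𝒳 i, ∀ i, x i = Sum.inl (a i)) →
      (¬ ∃ b : ∀ i, 𝒴 i, ∀ i, x i = Sum.inr (b i)) → χ x = 0)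

include hk hχ0

include hχ1 in
lemma applyU_fromBlocks_inl (a : ∀ i, 𝒳 i) :
    applyU (fun j => Matrix.fromBlocks (U j) 0 0 (V j)) χ (fun i => Sum.inl (a i))
      = applyU U ψ a := by
  unfold applyU
  rw [sum_pi_sum hk _ (fun x h1 h2 => by rw [hχ0 x h1 h2, mul_zero])]
  have hL : ∀ a' : ∀ i, 𝒳 i,
      (∏ j, Matrix.fromBlocks (U j) 0 0 (V j) (Sum.inl (a j)) (Sum.inl (a' j)))
        * χ (fun i => Sum.inl (a' i)) = (∏ j, U j (a j) (a' j)) * ψ a' := by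
    intro a'
    rw [hχ1 a']
    congr 1
  have hR : ∀ b : ∀ i, 𝒴 i,
      (∏ j, Matrix.fromBlocks (U j) 0 0 (V j) (Sum.inl (a j)) (Sum.inr (b j)))
        * χ (fun i => Sum.inr (b i)) = 0 := by
    intro b
    rw [Finset.prod_eq_zero (Finset.mem_univ ⟨0, hk⟩)
      (by rw [Matrix.fromBlocks_apply₁₂]; rfl), zero_mul]
  rw [Finset.sum_congr rfl (fun a' _ => hL a'), Finset.sum_congr rfl (fun b _ => hR b)]
  simp

include hχ2 in
lemma applyU_fromBlocks_inr (b : ∀ i, 𝒴 i) :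
    applyU (fun j => Matrix.fromBlocks (U j) 0 0 (V j)) χ (fun i => Sum.inr (b i))
      = applyU V φ b := by
  unfold applyU
  rw [sum_pi_sum hk _ (fun x h1 h2 => by rw [hχ0 x h1 h2, mul_zero])]
  have hL : ∀ a : ∀ i, 𝒳 i,
      (∏ j, Matrix.fromBlocks (U j) 0 0 (V j) (Sum.inr (b j)) (Sum.inl (a j)))
        * χ (fun i => Sum.inl (a i)) = 0 := by
    intro a
    rw [Finset.prod_eq_zero (Finset.mem_univ ⟨0, hk⟩)
      (by rw [Matrix.fromBlocks_apply₂₁]; rfl), zero_mul]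
  have hR : ∀ b' : ∀ i, 𝒴 i,
      (∏ j, Matrix.fromBlocks (U j) 0 0 (V j) (Sum.inr (b j)) (Sum.inr (b' j)))
        * χ (fun i => Sum.inr (b' i)) = (∏ j, V j (b j) (b' j)) * φ b' := by
    intro b'
    rw [hχ2 b']
    congr 1
  rw [Finset.sum_congr rfl (fun a _ => hL a), Finset.sum_congr rfl (fun b' _ => hR b')]
  simp

lemma applyU_fromBlocks_mixed (x : ∀ i, 𝒳 i ⊕ 𝒴 i)
    (h1 : ¬ ∃ a : ∀ i, 𝒳 i, ∀ i, x i = Sum.inl (a i))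
    (h2 : ¬ ∃ b : ∀ i, 𝒴 i, ∀ i, x i = Sum.inr (b i)) :
    applyU (fun j => Matrix.fromBlocks (U j) 0 0 (V j)) χ x = 0 := by
  obtain ⟨i1, c1, hc1⟩ := not_pure_inl_exists x h1
  obtain ⟨i2, c2, hc2⟩ := not_pure_inr_exists x h2
  unfold applyU
  rw [sum_pi_sum hk _ (fun x' h1' h2' => by rw [hχ0 x' h1' h2', mul_zero])]
  have hL : ∀ a : ∀ i, 𝒳 i,
      (∏ j, Matrix.fromBlocks (U j) 0 0 (V j) (x j) (Sum.inl (a j)))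
        * χ (fun i => Sum.inl (a i)) = 0 := by
    intro a
    rw [Finset.prod_eq_zero (Finset.mem_univ i1)
      (by rw [hc1, Matrix.fromBlocks_apply₂₁]; rfl), zero_mul]
  have hR : ∀ b : ∀ i, 𝒴 i,
      (∏ j, Matrix.fromBlocks (U j) 0 0 (V j) (x j) (Sum.inr (b j)))
        * χ (fun i => Sum.inr (b i)) = 0 := by
    intro b
    rw [Finset.prod_eq_zero (Finset.mem_univ i2)
      (by rw [hc2, Matrix.fromBlocks_apply₁₂]; rfl), zero_mul]
  rw [Finset.sum_congr rfl (fun a _ => hL a), Finset.sum_congr rfl (fun b _ => hR b)]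
  simp

end PartD

section PartE

lemma logb_rpow' (x e : ℝ) (hx : 0 < x) : Real.logb 2 (x ^ e) = e * Real.logb 2 x := by
  rw [Real.logb, Real.log_rpow hx, Real.logb]; ring

lemma logb_two_rpow (A : ℝ) : Real.logb 2 ((2:ℝ) ^ A) = A := by
  rw [logb_rpow' 2 A two_pos]
  simp

lemma sum_mul_logb_scale {X : Type*} [Fintype X] (c : ℝ) (A : X → ℝ) :
    ∑ x, (c * A x) * Real.logb 2 (c * A x)
      = c * Real.logb 2 c * (∑ x, A x) + c * ∑ x, A x * Real.logb 2 (A x) := by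
  rcases eq_or_ne c 0 with rfl | hc
  · simp
  · rw [Finset.mul_sum, Finset.mul_sum, ← Finset.sum_add_distrib]
    refine Finset.sum_congr rfl fun x _ => ?_
    rcases eq_or_ne (A x) 0 with h | h
    · simp [h]
    · rw [Real.logb_mul hc h]; ring

lemma sum_mul_logb_div_scale {X : Type*} [Fintype X] (c : ℝ) (A P : X → ℝ)
    (hAP : ∀ x, P x = 0 → A x = 0) :
    ∑ x, (c * A x) * Real.logb 2 ((c * A x) / P x)
      = c * Real.logb 2 c * (∑ x, A x) + c * klD A P := by
  unfold klD
  rcases eq_or_ne c 0 with rfl | hc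
  · simp
  · rw [Finset.mul_sum, Finset.mul_sum, ← Finset.sum_add_distrib]
    refine Finset.sum_congr rfl fun x _ => ?_
    rcases eq_or_ne (A x) 0 with h | h
    · simp [h]
    · have hP : P x ≠ 0 := fun hP => h (hAP x hP)
      rw [mul_div_assoc, Real.logb_mul hc (div_ne_zero h hP)]
      ring

variable {k : ℕ} {𝒳 𝒴 : Fin k → Type*} [∀ j, Fintype (𝒳 j)] [∀ j, DecidableEq (𝒳 j)]
  [∀ j, Fintype (𝒴 j)] [∀ j, DecidableEq (𝒴 j)]

lemma marg_inl (hk : 1 ≤ k) (Q : (∀ i, 𝒳 i ⊕ 𝒴 i) → ℝ)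
    (hQ0 : ∀ x, (¬ ∃ a : ∀ i, 𝒳 i, ∀ i, x i = Sum.inl (a i)) →
      (¬ ∃ b : ∀ i, 𝒴 i, ∀ i, x i = Sum.inr (b i)) → Q x = 0) (j : Fin k) (a : 𝒳 j) :
    marg Q j (Sum.inl a) = marg (fun a' => Q (fun i => Sum.inl (a' i))) j a := by
  unfold marg
  rw [sum_pi_sum hk _ (fun x h1 h2 => by rw [hQ0 x h1 h2]; simp)]
  have h2 : ∀ b : ∀ i, 𝒴 i, (if (Sum.inr (b j) : 𝒳 j ⊕ 𝒴 j) = Sum.inl a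
      then Q (fun i => Sum.inr (b i)) else 0) = 0 := fun b => by simp
  rw [Finset.sum_congr rfl (fun b _ => h2 b), Finset.sum_const_zero, add_zero]
  refine Finset.sum_congr rfl fun a' _ => ?_
  simp [Sum.inl.injEq]

lemma marg_inr (hk : 1 ≤ k) (Q : (∀ i, 𝒳 i ⊕ 𝒴 i) → ℝ)
    (hQ0 : ∀ x, (¬ ∃ a : ∀ i, 𝒳 i, ∀ i, x i = Sum.inl (a i)) →
      (¬ ∃ b : ∀ i, 𝒴 i, ∀ i, x i = Sum.inr (b i)) → Q x = 0) (j : Fin k) (b : 𝒴 j) :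
    marg Q j (Sum.inr b) = marg (fun b' => Q (fun i => Sum.inr (b' i))) j b := by
  unfold marg
  rw [sum_pi_sum hk _ (fun x h1 h2 => by rw [hQ0 x h1 h2]; simp)]
  have h2 : ∀ a : ∀ i, 𝒳 i, (if (Sum.inl (a j) : 𝒳 j ⊕ 𝒴 j) = Sum.inr b
      then Q (fun i => Sum.inl (a i)) else 0) = 0 := fun a => by simp
  rw [Finset.sum_congr rfl (fun a _ => h2 a), Finset.sum_const_zero, zero_add]
  refine Finset.sum_congr rfl fun b' _ => ?_
  simp [Sum.inr.injEq]

lemma marg_smul {k : ℕ} {𝒵 : Fin k → Type*} [∀ j, Fintype (𝒵 j)] [∀ j, DecidableEq (𝒵 j)]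
    (c : ℝ) (A : (∀ j, 𝒵 j) → ℝ) (j : Fin k) (a : 𝒵 j) :
    marg (fun x => c * A x) j a = c * marg A j a := by
  unfold marg
  rw [Finset.mul_sum]
  refine Finset.sum_congr rfl fun x _ => ?_
  split_ifs <;> simp

/-- The binary-entropy maximisation: `h(p) + pA + qB ≤ log₂(2^A + 2^B)`. -/
lemma binE (p q A B : ℝ) (hp : 0 < p) (hq : 0 < q) (hpq : p + q = 1) :
    -(p * Real.logb 2 p + q * Real.logb 2 q) + p * A + q * B
      ≤ Real.logb 2 ((2:ℝ) ^ A + (2:ℝ) ^ B) := by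
  have h2A : (0:ℝ) < 2 ^ A := Real.rpow_pos_of_pos two_pos A
  have h2B : (0:ℝ) < 2 ^ B := Real.rpow_pos_of_pos two_pos B
  have key := Real.geom_mean_le_arith_mean2_weighted hp.le hq.le
    (div_pos h2A hp).le (div_pos h2B hq).le hpq
  have hrhs : p * ((2:ℝ) ^ A / p) + q * ((2:ℝ) ^ B / q) = (2:ℝ) ^ A + (2:ℝ) ^ B := by
    field_simp
  rw [hrhs] at key
  have hlpos : 0 < ((2:ℝ) ^ A / p) ^ p * ((2:ℝ) ^ B / q) ^ q := by positivity
  have hlog := (Real.logb_le_logb one_lt_two hlpos (by linarith)).mpr key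
  have e1 : Real.logb 2 (((2:ℝ) ^ A / p) ^ p * ((2:ℝ) ^ B / q) ^ q)
      = p * (A - Real.logb 2 p) + q * (B - Real.logb 2 q) := by
    rw [Real.logb_mul (Real.rpow_pos_of_pos (div_pos h2A hp) p).ne'
      (Real.rpow_pos_of_pos (div_pos h2B hq) q).ne',
      logb_rpow' _ _ (div_pos h2A hp), logb_rpow' _ _ (div_pos h2B hq),
      Real.logb_div h2A.ne' hp.ne', Real.logb_div h2B.ne' hq.ne',
      logb_two_rpow, logb_two_rpow]
  rw [e1] at hlog
  linarith

end PartE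

section PartF

variable {k : ℕ} {𝒳 𝒴 : Fin k → Type*} [∀ j, Fintype (𝒳 j)] [∀ j, DecidableEq (𝒳 j)]
  [∀ j, Fintype (𝒴 j)] [∀ j, DecidableEq (𝒴 j)]

lemma exists_pos_of_sum_pos {X : Type*} [Fintype X] (P : X → ℝ) (hP : ∀ x, 0 ≤ P x)
    (hPs : 0 < ∑ x, P x) : ∃ x, 0 < P x := by
  by_contra h
  push_neg at h
  have : ∀ x, P x = 0 := fun x => le_antisymm (h x) (hP x)
  simp [this] at hPs

/-- The value of the `Hat` functional splits along a direct sum decomposition. -/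
lemma value_split (hk : 1 ≤ k) (α : ℝ) (hα : (1:ℝ) - α ≠ 0) (θ : Fin k → ℝ)
    (hθ : ∑ j, θ j = 1)
    (P : (∀ i, 𝒳 i) → ℝ) (R : (∀ i, 𝒴 i) → ℝ) (S : (∀ i, 𝒳 i ⊕ 𝒴 i) → ℝ)
    (hS1 : ∀ a, S (fun i => Sum.inl (a i)) = P a)
    (hS2 : ∀ b, S (fun i => Sum.inr (b i)) = R b)
    (Q : (∀ i, 𝒳 i ⊕ 𝒴 i) → ℝ)
    (hQmixed : ∀ x, (¬ ∃ a : ∀ i, 𝒳 i, ∀ i, x i = Sum.inl (a i)) →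
      (¬ ∃ b : ∀ i, 𝒴 i, ∀ i, x i = Sum.inr (b i)) → Q x = 0)
    (p q : ℝ) (Q₁ : (∀ i, 𝒳 i) → ℝ) (Q₂ : (∀ i, 𝒴 i) → ℝ)
    (hq1 : ∀ a, Q (fun i => Sum.inl (a i)) = p * Q₁ a)
    (hq2 : ∀ b, Q (fun i => Sum.inr (b i)) = q * Q₂ b)
    (h1sum : ∑ a, Q₁ a = 1) (h2sum : ∑ b, Q₂ b = 1)
    (hsuppL : ∀ a, P a = 0 → Q₁ a = 0) (hsuppR : ∀ b, R b = 0 → Q₂ b = 0) :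
    (∑ j, θ j * shEnt (marg Q j)) - α / (1 - α) * klD Q S
      = (1/(1-α)) * (-(p * Real.logb 2 p + q * Real.logb 2 q))
        + p * ((∑ j, θ j * shEnt (marg Q₁ j)) - α / (1 - α) * klD Q₁ P)
        + q * ((∑ j, θ j * shEnt (marg Q₂ j)) - α / (1 - α) * klD Q₂ R) := by
  have hQL : (fun a => Q (fun i => Sum.inl (a i))) = fun a => p * Q₁ a := funext hq1
  have hQR : (fun b => Q (fun i => Sum.inr (b i))) = fun b => q * Q₂ b := funext hq2
  -- entropy decomposition
  have ent : ∀ j, shEnt (marg Q j)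
      = -(p * Real.logb 2 p) - (q * Real.logb 2 q)
        + p * shEnt (marg Q₁ j) + q * shEnt (marg Q₂ j) := by
    intro j
    unfold shEnt
    rw [Fintype.sum_sum_type]
    have hL : ∀ a : 𝒳 j, marg Q j (Sum.inl a) = p * marg Q₁ j a := by
      intro a
      rw [marg_inl hk Q hQmixed j a, hQL, marg_smul]
    have hR : ∀ b : 𝒴 j, marg Q j (Sum.inr b) = q * marg Q₂ j b := by
      intro b
      rw [marg_inr hk Q hQmixed j b, hQR, marg_smul]
    have e1 : (∑ a : 𝒳 j, marg Q j (Sum.inl a) * Real.logb 2 (marg Q j (Sum.inl a)))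
        = ∑ a : 𝒳 j, (p * marg Q₁ j a) * Real.logb 2 (p * marg Q₁ j a) :=
      Finset.sum_congr rfl fun a _ => by rw [hL a]
    have e2 : (∑ b : 𝒴 j, marg Q j (Sum.inr b) * Real.logb 2 (marg Q j (Sum.inr b)))
        = ∑ b : 𝒴 j, (q * marg Q₂ j b) * Real.logb 2 (q * marg Q₂ j b) :=
      Finset.sum_congr rfl fun b _ => by rw [hR b]
    rw [e1, e2, sum_mul_logb_scale p (marg Q₁ j), sum_mul_logb_scale q (marg Q₂ j),
      sum_marg, sum_marg, h1sum, h2sum]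
    ring
  -- KL decomposition
  have kl : klD Q S = (p * Real.logb 2 p + q * Real.logb 2 q)
      + p * klD Q₁ P + q * klD Q₂ R := by
    unfold klD
    rw [sum_pi_sum hk _ (fun x h1 h2 => by rw [hQmixed x h1 h2]; simp)]
    have e1 : (∑ a : ∀ i, 𝒳 i, Q (fun i => Sum.inl (a i))
          * Real.logb 2 (Q (fun i => Sum.inl (a i)) / S (fun i => Sum.inl (a i))))
        = ∑ a : ∀ i, 𝒳 i, (p * Q₁ a) * Real.logb 2 ((p * Q₁ a) / P a) :=
      Finset.sum_congr rfl fun a _ => by rw [hq1 a, hS1 a]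
    have e2 : (∑ b : ∀ i, 𝒴 i, Q (fun i => Sum.inr (b i))
          * Real.logb 2 (Q (fun i => Sum.inr (b i)) / S (fun i => Sum.inr (b i))))
        = ∑ b : ∀ i, 𝒴 i, (q * Q₂ b) * Real.logb 2 ((q * Q₂ b) / R b) :=
      Finset.sum_congr rfl fun b _ => by rw [hq2 b, hS2 b]
    rw [e1, e2, sum_mul_logb_div_scale p Q₁ P hsuppL, sum_mul_logb_div_scale q Q₂ R hsuppR,
      h1sum, h2sum]
    unfold klD
    ring
  rw [Finset.sum_congr rfl (fun j _ => by rw [ent j]), kl]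
  have expand : ∑ j, θ j * (-(p * Real.logb 2 p) - (q * Real.logb 2 q)
      + p * shEnt (marg Q₁ j) + q * shEnt (marg Q₂ j))
      = (-(p * Real.logb 2 p) - (q * Real.logb 2 q)) * (∑ j, θ j)
        + p * (∑ j, θ j * shEnt (marg Q₁ j)) + q * (∑ j, θ j * shEnt (marg Q₂ j)) := by
    calc ∑ j, θ j * (-(p * Real.logb 2 p) - (q * Real.logb 2 q)
          + p * shEnt (marg Q₁ j) + q * shEnt (marg Q₂ j))
        = ∑ j, ((-(p * Real.logb 2 p) - (q * Real.logb 2 q)) * θ j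
            + p * (θ j * shEnt (marg Q₁ j)) + q * (θ j * shEnt (marg Q₂ j))) :=
          Finset.sum_congr rfl fun j _ => by ring
      _ = _ := by
          rw [Finset.sum_add_distrib, Finset.sum_add_distrib, ← Finset.mul_sum,
            ← Finset.mul_sum, ← Finset.mul_sum]
  rw [expand, hθ]
  field_simp
  ring

/-- Key inequality: `Hat` of a direct sum is at most the `log₂`-sum bound. -/
lemma hat_directSum (hk : 1 ≤ k) (α : ℝ) (hα : α ∈ Set.Ioo (0:ℝ) 1)
    (θ : Fin k → ℝ) (hθ : probVec θ)
    (P : (∀ i, 𝒳 i) → ℝ) (R : (∀ i, 𝒴 i) → ℝ) (S : (∀ i, 𝒳 i ⊕ 𝒴 i) → ℝ)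
    (hP : ∀ x, 0 ≤ P x) (hR : ∀ x, 0 ≤ R x)
    (hPs : 0 < ∑ x, P x) (hRs : 0 < ∑ x, R x)
    (hS1 : ∀ a, S (fun i => Sum.inl (a i)) = P a)
    (hS2 : ∀ b, S (fun i => Sum.inr (b i)) = R b)
    (hS0 : ∀ x, (¬ ∃ a : ∀ i, 𝒳 i, ∀ i, x i = Sum.inl (a i)) →
      (¬ ∃ b : ∀ i, 𝒴 i, ∀ i, x i = Sum.inr (b i)) → S x = 0) :
    Hat α θ S ≤ (1/(1-α)) * Real.logb 2
      ((2:ℝ) ^ ((1-α) * Hat α θ P) + (2:ℝ) ^ ((1-α) * Hat α θ R)) := by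
  classical
  have h1α : 0 < 1 - α := by have := hα.2; linarith
  have hSnn : ∀ x, 0 ≤ S x := by
    intro x
    by_cases hx1 : ∃ a : ∀ i, 𝒳 i, ∀ i, x i = Sum.inl (a i)
    · obtain ⟨a, ha⟩ := hx1
      have : x = fun i => Sum.inl (a i) := funext ha
      rw [this, hS1]; exact hP a
    by_cases hx2 : ∃ b : ∀ i, 𝒴 i, ∀ i, x i = Sum.inr (b i)
    · obtain ⟨b, hb⟩ := hx2
      have : x = fun i => Sum.inr (b i) := funext hb
      rw [this, hS2]; exact hR b
    · rw [hS0 x hx1 hx2]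
  have hSsum : ∑ x, S x = (∑ a, P a) + ∑ b, R b := by
    rw [sum_pi_sum hk S hS0, Finset.sum_congr rfl (fun a _ => hS1 a),
      Finset.sum_congr rfl (fun b _ => hS2 b)]
  have hSs : 0 < ∑ x, S x := by rw [hSsum]; linarith
  -- abbreviations
  set HP := Hat α θ P with hHP
  set HR := Hat α θ R with hHR
  set c := (1/(1-α)) * Real.logb 2 ((2:ℝ) ^ ((1-α) * HP) + (2:ℝ) ^ ((1-α) * HR)) with hc
  have h2P : (0:ℝ) < 2 ^ ((1-α) * HP) := Real.rpow_pos_of_pos two_pos _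
  have h2R : (0:ℝ) < 2 ^ ((1-α) * HR) := Real.rpow_pos_of_pos two_pos _
  have hHPc : HP ≤ c := by
    have h' : (1-α) * HP ≤ Real.logb 2 ((2:ℝ) ^ ((1-α) * HP) + (2:ℝ) ^ ((1-α) * HR)) := by
      calc (1-α) * HP = Real.logb 2 ((2:ℝ) ^ ((1-α) * HP)) := (logb_two_rpow _).symm
        _ ≤ _ := (Real.logb_le_logb one_lt_two h2P (by positivity)).mpr (by linarith)
    have hmul := mul_le_mul_of_nonneg_left h' (one_div_pos.mpr h1α).le
    calc HP = (1/(1-α)) * ((1-α) * HP) := by field_simp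
      _ ≤ c := by rw [hc]; exact hmul
  have hHRc : HR ≤ c := by
    have h' : (1-α) * HR ≤ Real.logb 2 ((2:ℝ) ^ ((1-α) * HP) + (2:ℝ) ^ ((1-α) * HR)) := by
      calc (1-α) * HR = Real.logb 2 ((2:ℝ) ^ ((1-α) * HR)) := (logb_two_rpow _).symm
        _ ≤ _ := (Real.logb_le_logb one_lt_two h2R (by positivity)).mpr (by linarith)
    have hmul := mul_le_mul_of_nonneg_left h' (one_div_pos.mpr h1α).le
    calc HR = (1/(1-α)) * ((1-α) * HR) := by field_simp
      _ ≤ c := by rw [hc]; exact hmul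
  rw [Hat_eq_sSup]
  refine csSup_le (hatSet_nonempty α θ S hSnn hSs) ?_
  rintro v ⟨Q, hQ, hsupp, rfl⟩
  have hQmixed : ∀ x, (¬ ∃ a : ∀ i, 𝒳 i, ∀ i, x i = Sum.inl (a i)) →
      (¬ ∃ b : ∀ i, 𝒴 i, ∀ i, x i = Sum.inr (b i)) → Q x = 0 :=
    fun x h1 h2 => hsupp x (hS0 x h1 h2)
  set p := ∑ a : ∀ i, 𝒳 i, Q (fun i => Sum.inl (a i)) with hp
  set q := ∑ b : ∀ i, 𝒴 i, Q (fun i => Sum.inr (b i)) with hq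
  have hpq : p + q = 1 := by
    have := sum_pi_sum hk Q hQmixed
    rw [hQ.2] at this
    linarith [this]
  have hp0 : 0 ≤ p := Finset.sum_nonneg fun a _ => hQ.1 _
  have hq0 : 0 ≤ q := Finset.sum_nonneg fun b _ => hQ.1 _
  have hsuppL' : ∀ a, P a = 0 → Q (fun i => Sum.inl (a i)) = 0 := by
    intro a h
    exact hsupp _ (by rw [hS1]; exact h)
  have hsuppR' : ∀ b, R b = 0 → Q (fun i => Sum.inr (b i)) = 0 := by
    intro b h
    exact hsupp _ (by rw [hS2]; exact h)
  rcases eq_or_lt_of_le hp0 with hpz | hppos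
  · -- p = 0 : the distribution lives on the 𝒴-block
    have hpz : p = 0 := hpz.symm
    have hqz : q = 1 := by linarith
    have hQL0 : ∀ a : ∀ i, 𝒳 i, Q (fun i => Sum.inl (a i)) = 0 := by
      intro a
      have := (Finset.sum_eq_zero_iff_of_nonneg (fun a _ => hQ.1 _)).mp
        (by rw [← hp, hpz] : ∑ a : ∀ i, 𝒳 i, Q (fun i => Sum.inl (a i)) = 0)
      exact this a (Finset.mem_univ a)
    obtain ⟨x0, hx0⟩ := exists_pos_of_sum_pos P hP hPs
    have h1sum : ∑ a : ∀ i, 𝒳 i, (if a = x0 then (1:ℝ) else 0) = 1 := by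
      rw [Finset.sum_ite_eq' Finset.univ x0 (fun _ => (1:ℝ))]; simp
    have h2sum : ∑ b : ∀ i, 𝒴 i, Q (fun i => Sum.inr (b i)) = 1 := by rw [← hq, hqz]
    have hv := value_split hk α h1α.ne' θ hθ.2 P R S hS1 hS2 Q hQmixed 0 1
      (fun a => if a = x0 then (1:ℝ) else 0) (fun b => Q (fun i => Sum.inr (b i)))
      (fun a => by rw [hQL0 a, zero_mul])
      (fun b => by rw [one_mul])
      h1sum h2sum
      (fun a h => if_neg (fun he : a = x0 => hx0.ne' (he ▸ h)))
      (fun b h => hsuppR' b h)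
    rw [hv]
    simp only [Real.logb_zero, Real.logb_one, zero_mul, one_mul, mul_zero, add_zero,
      zero_add, neg_zero, mul_zero]
    have hmem : ((∑ j, θ j * shEnt (marg (fun b => Q (fun i => Sum.inr (b i))) j))
        - α / (1 - α) * klD (fun b => Q (fun i => Sum.inr (b i))) R) ∈ hatSet α θ R :=
      ⟨_, ⟨fun b => hQ.1 _, h2sum⟩, hsuppR', rfl⟩
    have := le_csSup (hatSet_bddAbove α hα θ hθ R hR hRs) hmem
    rw [← Hat_eq_sSup] at this
    exact this.trans hHRc
  rcases eq_or_lt_of_le hq0 with hqz | hqpos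
  · -- q = 0 : the distribution lives on the 𝒳-block
    have hqz : q = 0 := hqz.symm
    have hpz : p = 1 := by linarith
    have hQR0 : ∀ b : ∀ i, 𝒴 i, Q (fun i => Sum.inr (b i)) = 0 := by
      intro b
      have := (Finset.sum_eq_zero_iff_of_nonneg (fun b _ => hQ.1 _)).mp
        (by rw [← hq, hqz] : ∑ b : ∀ i, 𝒴 i, Q (fun i => Sum.inr (b i)) = 0)
      exact this b (Finset.mem_univ b)
    obtain ⟨y0, hy0⟩ := exists_pos_of_sum_pos R hR hRs
    have h2sum : ∑ b : ∀ i, 𝒴 i, (if b = y0 then (1:ℝ) else 0) = 1 := by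
      rw [Finset.sum_ite_eq' Finset.univ y0 (fun _ => (1:ℝ))]; simp
    have h1sum : ∑ a : ∀ i, 𝒳 i, Q (fun i => Sum.inl (a i)) = 1 := by rw [← hp, hpz]
    have hv := value_split hk α h1α.ne' θ hθ.2 P R S hS1 hS2 Q hQmixed 1 0
      (fun a => Q (fun i => Sum.inl (a i))) (fun b => if b = y0 then (1:ℝ) else 0)
      (fun a => by rw [one_mul])
      (fun b => by rw [hQR0 b, zero_mul])
      h1sum h2sum
      (fun a h => hsuppL' a h)
      (fun b h => if_neg (fun he : b = y0 => hy0.ne' (he ▸ h)))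
    rw [hv]
    simp only [Real.logb_zero, Real.logb_one, zero_mul, one_mul, mul_zero, add_zero,
      zero_add, neg_zero, mul_zero]
    have hmem : ((∑ j, θ j * shEnt (marg (fun a => Q (fun i => Sum.inl (a i))) j))
        - α / (1 - α) * klD (fun a => Q (fun i => Sum.inl (a i))) P) ∈ hatSet α θ P :=
      ⟨_, ⟨fun a => hQ.1 _, h1sum⟩, hsuppL', rfl⟩
    have := le_csSup (hatSet_bddAbove α hα θ hθ P hP hPs) hmem
    rw [← Hat_eq_sSup] at this
    exact this.trans hHPc
  · -- 0 < p, 0 < q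
    have h1sum : ∑ a : ∀ i, 𝒳 i, Q (fun i => Sum.inl (a i)) / p = 1 := by
      rw [← Finset.sum_div, ← hp, div_self hppos.ne']
    have h2sum : ∑ b : ∀ i, 𝒴 i, Q (fun i => Sum.inr (b i)) / q = 1 := by
      rw [← Finset.sum_div, ← hq, div_self hqpos.ne']
    have hv := value_split hk α h1α.ne' θ hθ.2 P R S hS1 hS2 Q hQmixed p q
      (fun a => Q (fun i => Sum.inl (a i)) / p) (fun b => Q (fun i => Sum.inr (b i)) / q)
      (fun a => by field_simp)
      (fun b => by field_simp)
      h1sum h2sum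
      (fun a h => by show Q (fun i => Sum.inl (a i)) / p = 0; rw [hsuppL' a h, zero_div])
      (fun b h => by show Q (fun i => Sum.inr (b i)) / q = 0; rw [hsuppR' b h, zero_div])
    rw [hv]
    have hf1 : ((∑ j, θ j * shEnt (marg (fun a => Q (fun i => Sum.inl (a i)) / p) j))
        - α / (1 - α) * klD (fun a => Q (fun i => Sum.inl (a i)) / p) P) ≤ HP := by
      have hmem : _ ∈ hatSet α θ P :=
        ⟨_, ⟨fun a => div_nonneg (hQ.1 _) hp0, h1sum⟩,
          fun a h => by show Q (fun i => Sum.inl (a i)) / p = 0; rw [hsuppL' a h, zero_div], rfl⟩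
      have := le_csSup (hatSet_bddAbove α hα θ hθ P hP hPs) hmem
      rw [← Hat_eq_sSup] at this
      exact this
    have hf2 : ((∑ j, θ j * shEnt (marg (fun b => Q (fun i => Sum.inr (b i)) / q) j))
        - α / (1 - α) * klD (fun b => Q (fun i => Sum.inr (b i)) / q) R) ≤ HR := by
      have hmem : _ ∈ hatSet α θ R :=
        ⟨_, ⟨fun b => div_nonneg (hQ.1 _) hq0, h2sum⟩,
          fun b h => by show Q (fun i => Sum.inr (b i)) / q = 0; rw [hsuppR' b h, zero_div], rfl⟩
      have := le_csSup (hatSet_bddAbove α hα θ hθ R hR hRs) hmem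
      rw [← Hat_eq_sSup] at this
      exact this
    have step1 : (1/(1-α)) * (-(p * Real.logb 2 p + q * Real.logb 2 q))
        + p * ((∑ j, θ j * shEnt (marg (fun a => Q (fun i => Sum.inl (a i)) / p) j))
          - α / (1 - α) * klD (fun a => Q (fun i => Sum.inl (a i)) / p) P)
        + q * ((∑ j, θ j * shEnt (marg (fun b => Q (fun i => Sum.inr (b i)) / q) j))
          - α / (1 - α) * klD (fun b => Q (fun i => Sum.inr (b i)) / q) R)
        ≤ (1/(1-α)) * (-(p * Real.logb 2 p + q * Real.logb 2 q)) + p * HP + q * HR := by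
      have := mul_le_mul_of_nonneg_left hf1 hp0
      have := mul_le_mul_of_nonneg_left hf2 hq0
      linarith
    refine step1.trans ?_
    have hb := binE p q ((1-α) * HP) ((1-α) * HR) hppos hqpos hpq
    have := mul_le_mul_of_nonneg_left hb (le_of_lt (one_div_pos.mpr h1α))
    calc (1/(1-α)) * (-(p * Real.logb 2 p + q * Real.logb 2 q)) + p * HP + q * HR
        = (1/(1-α)) * (-(p * Real.logb 2 p + q * Real.logb 2 q)
            + p * ((1-α) * HP) + q * ((1-α) * HR)) := by field_simp
      _ ≤ (1/(1-α)) * Real.logb 2 ((2:ℝ) ^ ((1-α) * HP) + (2:ℝ) ^ ((1-α) * HR)) := this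
      _ = c := by rw [hc]

end PartF

section PartG

lemma sum_sq_abs_pos {Y : Type*} [Fintype Y] (f : Y → ℂ) (hf : f ≠ 0) :
    0 < ∑ y, ‖f y‖ ^ 2 := by
  have : ∃ y, f y ≠ 0 := by
    by_contra h; push_neg at h; exact hf (funext h)
  obtain ⟨y, hy⟩ := this
  refine Finset.sum_pos' (fun y _ => by positivity) ⟨y, Finset.mem_univ y, pow_pos (norm_pos_iff.mpr hy) 2⟩

lemma measd_nonneg {k : ℕ} {𝒳 : Fin k → Type*} [∀ j, Fintype (𝒳 j)]
    (U : ∀ j, Matrix (𝒳 j) (𝒳 j) ℂ) (ψ : (∀ j, 𝒳 j) → ℂ) (x : ∀ j, 𝒳 j) :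
    0 ≤ measd U ψ x := by
  unfold measd; positivity

/-- Definitional description of `rhoAT`. -/
lemma rhoAT_eq_sInf {k : ℕ} {𝒳 : Fin k → Type*} [∀ j, Fintype (𝒳 j)]
    [∀ j, DecidableEq (𝒳 j)] (α : ℝ) (θ : Fin k → ℝ) (ψ : (∀ j, 𝒳 j) → ℂ) :
    rhoAT α θ ψ = sInf { v : ℝ | ∃ U : ∀ j, Matrix (𝒳 j) (𝒳 j) ℂ,
      (∀ j, U j ∈ Matrix.unitaryGroup (𝒳 j) ℂ) ∧ v = Hat α θ (measd U ψ) } := rfl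

lemma rhoSet_nonempty {k : ℕ} {𝒳 : Fin k → Type*} [∀ j, Fintype (𝒳 j)]
    [∀ j, DecidableEq (𝒳 j)] (α : ℝ) (θ : Fin k → ℝ) (ψ : (∀ j, 𝒳 j) → ℂ) :
    { v : ℝ | ∃ U : ∀ j, Matrix (𝒳 j) (𝒳 j) ℂ,
      (∀ j, U j ∈ Matrix.unitaryGroup (𝒳 j) ℂ) ∧ v = Hat α θ (measd U ψ) }.Nonempty :=
  ⟨_, fun _ => 1, fun j => one_mem _, rfl⟩

lemma rhoSet_bddBelow {k : ℕ} {𝒳 : Fin k → Type*} [∀ j, Fintype (𝒳 j)]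
    [∀ j, DecidableEq (𝒳 j)] (α : ℝ) (hα : α ∈ Set.Ioo (0:ℝ) 1) (θ : Fin k → ℝ)
    (hθ : probVec θ) (ψ : (∀ j, 𝒳 j) → ℂ) (hψ : ψ ≠ 0) :
    BddBelow { v : ℝ | ∃ U : ∀ j, Matrix (𝒳 j) (𝒳 j) ℂ,
      (∀ j, U j ∈ Matrix.unitaryGroup (𝒳 j) ℂ) ∧ v = Hat α θ (measd U ψ) } := by
  refine ⟨α / (1 - α) * Real.logb 2 ((∑ y, ‖ψ y‖ ^ 2)
    / (Fintype.card (∀ j, 𝒳 j) : ℝ)), ?_⟩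
  rintro v ⟨U, hU, rfl⟩
  have hsum : ∑ x, measd U ψ x = ∑ y, ‖ψ y‖ ^ 2 := sum_measd U hU ψ
  have h := hat_lb α hα θ hθ (measd U ψ) (measd_nonneg U ψ)
    (by rw [hsum]; exact sum_sq_abs_pos ψ hψ)
  rw [hsum] at h
  exact h

theorem stmt11' {k : ℕ} (hk : 1 ≤ k) (𝒳 𝒴 : Fin k → Type)
    [∀ i, Fintype (𝒳 i)] [∀ i, DecidableEq (𝒳 i)]
    [∀ i, Fintype (𝒴 i)] [∀ i, DecidableEq (𝒴 i)]
    (α : ℝ) (hα : α ∈ Set.Ioo (0 : ℝ) 1) (θ : Fin k → ℝ) (hθ : probVec θ)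
    (ψ : (∀ i, 𝒳 i) → ℂ) (φ : (∀ i, 𝒴 i) → ℂ) (hψ : ψ ≠ 0) (hφ : φ ≠ 0)
    (χ : (∀ i, 𝒳 i ⊕ 𝒴 i) → ℂ)
    (hχ1 : ∀ a : ∀ i, 𝒳 i, χ (fun i => Sum.inl (a i)) = ψ a)
    (hχ2 : ∀ b : ∀ i, 𝒴 i, χ (fun i => Sum.inr (b i)) = φ b)
    (hχ0 : ∀ x : ∀ i, 𝒳 i ⊕ 𝒴 i,
      (¬ ∃ a : ∀ i, 𝒳 i, ∀ i, x i = Sum.inl (a i)) →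
      (¬ ∃ b : ∀ i, 𝒴 i, ∀ i, x i = Sum.inr (b i)) → χ x = 0) :
    (2 : ℝ) ^ ((1 - α) * rhoAT α θ χ) ≤
      (2 : ℝ) ^ ((1 - α) * rhoAT α θ ψ) + (2 : ℝ) ^ ((1 - α) * rhoAT α θ φ) := by
  have h1α : 0 < 1 - α := by have := hα.2; linarith
  have hχne : χ ≠ 0 := by
    intro h
    obtain ⟨y, hy⟩ : ∃ y, ψ y ≠ 0 := by
      by_contra h'; push_neg at h'; exact hψ (funext h')
    exact hy (by rw [← hχ1 y, h]; rfl)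
  set A := rhoAT α θ ψ with hA
  set B := rhoAT α θ φ with hB
  set C := rhoAT α θ χ with hC
  -- step: for every ε > 0
  have hstep : ∀ ε : ℝ, 0 < ε →
      (2:ℝ) ^ ((1 - α) * C) ≤
        ((2:ℝ) ^ ((1 - α) * A) + (2:ℝ) ^ ((1 - α) * B)) * (2:ℝ) ^ ((1 - α) * ε) := by
    intro ε hε
    obtain ⟨u, hu_mem, hu_lt⟩ := Real.lt_sInf_add_pos (rhoSet_nonempty α θ ψ) hε
    obtain ⟨U, hU, rfl⟩ := hu_mem
    obtain ⟨v, hv_mem, hv_lt⟩ := Real.lt_sInf_add_pos (rhoSet_nonempty α θ φ) hε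
    obtain ⟨V, hV, rfl⟩ := hv_mem
    rw [← rhoAT_eq_sInf, ← hA] at hu_lt
    rw [← rhoAT_eq_sInf, ← hB] at hv_lt
    set W : ∀ j, Matrix (𝒳 j ⊕ 𝒴 j) (𝒳 j ⊕ 𝒴 j) ℂ :=
      fun j => Matrix.fromBlocks (U j) 0 0 (V j) with hW
    have hWu : ∀ j, W j ∈ Matrix.unitaryGroup (𝒳 j ⊕ 𝒴 j) ℂ :=
      fun j => fromBlocks_mem_unitary (U j) (V j) (hU j) (hV j)
    have hS1 : ∀ a : ∀ i, 𝒳 i, measd W χ (fun i => Sum.inl (a i)) = measd U ψ a := by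
      intro a
      unfold measd
      rw [applyU_fromBlocks_inl hk U V ψ χ hχ1 hχ0 a]
    have hS2 : ∀ b : ∀ i, 𝒴 i, measd W χ (fun i => Sum.inr (b i)) = measd V φ b := by
      intro b
      unfold measd
      rw [applyU_fromBlocks_inr hk U V φ χ hχ2 hχ0 b]
    have hS0 : ∀ x : ∀ i, 𝒳 i ⊕ 𝒴 i,
        (¬ ∃ a : ∀ i, 𝒳 i, ∀ i, x i = Sum.inl (a i)) →
        (¬ ∃ b : ∀ i, 𝒴 i, ∀ i, x i = Sum.inr (b i)) → measd W χ x = 0 := by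
      intro x h1 h2
      unfold measd
      rw [applyU_fromBlocks_mixed hk U V χ hχ0 x h1 h2]
      simp
    have hPs : 0 < ∑ x, measd U ψ x := by
      rw [sum_measd U hU ψ]; exact sum_sq_abs_pos ψ hψ
    have hRs : 0 < ∑ x, measd V φ x := by
      rw [sum_measd V hV φ]; exact sum_sq_abs_pos φ hφ
    have hkey := hat_directSum hk α hα θ hθ (measd U ψ) (measd V φ) (measd W χ)
      (measd_nonneg U ψ) (measd_nonneg V φ) hPs hRs hS1 hS2 hS0
    have hCle : C ≤ Hat α θ (measd W χ) := by
      rw [hC, rhoAT_eq_sInf]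
      exact csInf_le (rhoSet_bddBelow α hα θ hθ χ hχne) ⟨W, hWu, rfl⟩
    have h2 : (1 - α) * C ≤ Real.logb 2
        ((2:ℝ) ^ ((1-α) * Hat α θ (measd U ψ)) + (2:ℝ) ^ ((1-α) * Hat α θ (measd V φ))) := by
      have := mul_le_mul_of_nonneg_left (hCle.trans hkey) h1α.le
      calc (1 - α) * C ≤ (1 - α) * ((1/(1-α)) * Real.logb 2
          ((2:ℝ) ^ ((1-α) * Hat α θ (measd U ψ))
            + (2:ℝ) ^ ((1-α) * Hat α θ (measd V φ)))) := this
        _ = _ := by field_simp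
    have h3 : (2:ℝ) ^ ((1 - α) * C) ≤
        (2:ℝ) ^ ((1-α) * Hat α θ (measd U ψ)) + (2:ℝ) ^ ((1-α) * Hat α θ (measd V φ)) := by
      have hpos : (0:ℝ) < (2:ℝ) ^ ((1-α) * Hat α θ (measd U ψ))
          + (2:ℝ) ^ ((1-α) * Hat α θ (measd V φ)) := by positivity
      calc (2:ℝ) ^ ((1 - α) * C)
          ≤ (2:ℝ) ^ (Real.logb 2 ((2:ℝ) ^ ((1-α) * Hat α θ (measd U ψ))
            + (2:ℝ) ^ ((1-α) * Hat α θ (measd V φ)))) :=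
            (Real.rpow_le_rpow_left_iff one_lt_two).mpr h2
        _ = _ := Real.rpow_logb two_pos (by norm_num) hpos
    have h4 : (2:ℝ) ^ ((1-α) * Hat α θ (measd U ψ)) ≤ (2:ℝ) ^ ((1-α) * (A + ε)) :=
      (Real.rpow_le_rpow_left_iff one_lt_two).mpr
        (mul_le_mul_of_nonneg_left hu_lt.le h1α.le)
    have h5 : (2:ℝ) ^ ((1-α) * Hat α θ (measd V φ)) ≤ (2:ℝ) ^ ((1-α) * (B + ε)) :=
      (Real.rpow_le_rpow_left_iff one_lt_two).mpr
        (mul_le_mul_of_nonneg_left hv_lt.le h1α.le)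
    have h6 : (2:ℝ) ^ ((1-α) * (A + ε)) = (2:ℝ) ^ ((1-α) * A) * (2:ℝ) ^ ((1-α) * ε) := by
      rw [mul_add, Real.rpow_add two_pos]
    have h7 : (2:ℝ) ^ ((1-α) * (B + ε)) = (2:ℝ) ^ ((1-α) * B) * (2:ℝ) ^ ((1-α) * ε) := by
      rw [mul_add, Real.rpow_add two_pos]
    have h8 := h3.trans (add_le_add h4 h5)
    rw [h6, h7, ← add_mul] at h8
    exact h8
  -- conclude by letting ε → 0
  by_contra hcon
  push_neg at hcon
  set L := (2:ℝ) ^ ((1 - α) * C) with hL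
  set Ra := (2:ℝ) ^ ((1 - α) * A) with hRa
  set Rb := (2:ℝ) ^ ((1 - α) * B) with hRb
  have hRapos : 0 < Ra := Real.rpow_pos_of_pos two_pos _
  have hRbpos : 0 < Rb := Real.rpow_pos_of_pos two_pos _
  have hLpos : 0 < L := Real.rpow_pos_of_pos two_pos _
  have hsumpos : 0 < Ra + Rb := by linarith
  set r := L / (Ra + Rb) with hr
  have hr1 : 1 < r := (one_lt_div hsumpos).mpr hcon
  set ε := Real.logb 2 r / (2 * (1 - α)) with hε
  have hεpos : 0 < ε := by
    apply div_pos
    · exact Real.logb_pos one_lt_two hr1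
    · linarith
  have hd : (2:ℝ) ^ ((1 - α) * ε) = r ^ ((1:ℝ)/2) := by
    rw [hε]
    rw [show (1 - α) * (Real.logb 2 r / (2 * (1 - α))) = Real.logb 2 r * (1/2) by
      field_simp]
    rw [Real.rpow_mul (by norm_num : (0:ℝ) ≤ 2), Real.rpow_logb two_pos (by norm_num)
      (by positivity)]
  have hdr : r ^ ((1:ℝ)/2) < r := by
    calc r ^ ((1:ℝ)/2) < r ^ (1:ℝ) :=
        Real.rpow_lt_rpow_of_exponent_lt hr1 (by norm_num)
      _ = r := Real.rpow_one r
  have := hstep ε hεpos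
  rw [hd] at this
  have hfinal : L < L := by
    calc L ≤ (Ra + Rb) * r ^ ((1:ℝ)/2) := this
      _ < (Ra + Rb) * r := by
          exact mul_lt_mul_of_pos_left hdr hsumpos
      _ = L := by rw [hr]; field_simp
  exact lt_irrefl L hfinal

end PartG


/-- `2^{(1-α)ρ^{α,θ}}` is subadditive under direct sums.  The direct
sum `χ = ψ ⊕ φ` on `(𝒳₁⊔𝒴₁) × … × (𝒳ₖ⊔𝒴ₖ)` is characterised by agreeing with `ψ` on
the embedded `𝒳`-tuples, with `φ` on the embedded `𝒴`-tuples, and vanishing on all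
mixed tuples. -/
theorem stmt11 {k : ℕ} (hk : 1 ≤ k) (𝒳 𝒴 : Fin k → Type)
    [∀ i, Fintype (𝒳 i)] [∀ i, DecidableEq (𝒳 i)]
    [∀ i, Fintype (𝒴 i)] [∀ i, DecidableEq (𝒴 i)]
    (α : ℝ) (hα : α ∈ Set.Ioo (0 : ℝ) 1) (θ : Fin k → ℝ) (hθ : probVec θ)
    (ψ : (∀ i, 𝒳 i) → ℂ) (φ : (∀ i, 𝒴 i) → ℂ) (hψ : ψ ≠ 0) (hφ : φ ≠ 0)
    (χ : (∀ i, 𝒳 i ⊕ 𝒴 i) → ℂ)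
    (hχ1 : ∀ a : ∀ i, 𝒳 i, χ (fun i => Sum.inl (a i)) = ψ a)
    (hχ2 : ∀ b : ∀ i, 𝒴 i, χ (fun i => Sum.inr (b i)) = φ b)
    (hχ0 : ∀ x : ∀ i, 𝒳 i ⊕ 𝒴 i,
      (¬ ∃ a : ∀ i, 𝒳 i, ∀ i, x i = Sum.inl (a i)) →
      (¬ ∃ b : ∀ i, 𝒴 i, ∀ i, x i = Sum.inr (b i)) → χ x = 0) :
    (2 : ℝ) ^ ((1 - α) * rhoAT α θ χ) ≤
      (2 : ℝ) ^ ((1 - α) * rhoAT α θ ψ) + (2 : ℝ) ^ ((1 - α) * rhoAT α θ φ) := by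
  exact stmt11' hk 𝒳 𝒴 α hα θ hθ ψ φ hψ hφ χ hχ1 hχ2 hχ0
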